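/- If a_(1) ⊗ d(a_(2)) = a_(2) ⊗ d(a_(1)) in A⊗H for all a ∈ A, then 𝒮 is anti-multiplicative for ∘ on the cotensor product: for every Σ_i m_i ⊗ n_i ∈ H1□H1, Σ_i 𝒮(m_i ∘ n_i) = Σ_i 𝒮(n_i) ∘ 𝒮(m_i). (Proposition 2.7(i).) -/

import Mathlib

open TensorProduct

noncomputable section

variable (k A H : Type*) [Field k] [Ring A] [Ring H]
  [HopfAlgebra k A] [HopfAlgebra k H]

/-- `t(a⊗h) = d(a)h`. -/
def tmap (d : A →ₗ[k] H) : A ⊗[k] H →ₗ[k] H :=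
  LinearMap.mul' k H ∘ₗ map d LinearMap.id

/-- `s(a⊗h) = ε(a)h`. -/
def smap : A ⊗[k] H →ₗ[k] H :=
  (TensorProduct.lid k H).toLinearMap ∘ₗ map (Coalgebra.counit : A →ₗ[k] k) LinearMap.id

/-- `i(h) = 1⊗h`. -/
def imap : H →ₗ[k] A ⊗[k] H := TensorProduct.mk k A H 1

/-- The tensor-product coproduct `Δ(a⊗h) = (a₁⊗h₁) ⊗ (a₂⊗h₂)` on `H1 = A ⊗ H`. -/
def comul1 : A ⊗[k] H →ₗ[k] (A ⊗[k] H) ⊗[k] (A ⊗[k] H) :=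
  (tensorTensorTensorComm k A A H H).toLinearMap ∘ₗ
    map (Coalgebra.comul : A →ₗ[k] A ⊗[k] A) (Coalgebra.comul : H →ₗ[k] H ⊗[k] H)

/-- The tensor-product counit `ε(a⊗h) = ε(a)ε(h)` on `H1 = A ⊗ H`. -/
def counit1 : A ⊗[k] H →ₗ[k] k :=
  (TensorProduct.lid k k).toLinearMap ∘ₗ
    map (Coalgebra.counit : A →ₗ[k] k) (Coalgebra.counit : H →ₗ[k] k)

/-- The left coaction `DL = (t⊗id)Δ`. -/
def DLmap (d : A →ₗ[k] H) : A ⊗[k] H →ₗ[k] H ⊗[k] (A ⊗[k] H) :=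
  map (tmap k A H d) LinearMap.id ∘ₗ comul1 k A H

/-- The right coaction `DR = (id⊗s)Δ`. -/
def DRmap : A ⊗[k] H →ₗ[k] (A ⊗[k] H) ⊗[k] H :=
  map LinearMap.id (smap k A H) ∘ₗ comul1 k A H

/-- The second product `(a⊗h)∘(b⊗g) = ε(h) ab ⊗ g`. -/
def circ : (A ⊗[k] H) ⊗[k] (A ⊗[k] H) →ₗ[k] A ⊗[k] H :=
  map (LinearMap.mul' k A)
      ((TensorProduct.lid k H).toLinearMap ∘ₗ map (Coalgebra.counit : H →ₗ[k] k) LinearMap.id)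
    ∘ₗ (tensorTensorTensorComm k A H A H).toLinearMap

/-- The quantum groupoid antipode `𝒮(a⊗h) = S(a₁) ⊗ d(a₂)h`. -/
def SS (d : A →ₗ[k] H) : A ⊗[k] H →ₗ[k] A ⊗[k] H :=
  map (HopfAlgebra.antipode (R := k) : A →ₗ[k] A) (tmap k A H d)
    ∘ₗ (TensorProduct.assoc k A A H).toLinearMap
    ∘ₗ map (Coalgebra.comul : A →ₗ[k] A ⊗[k] A) LinearMap.id

/-- The smash product multiplication `(a⊗h)(b⊗g) = a(h₁▷b) ⊗ h₂g`. -/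
def smashMul (act : H ⊗[k] A →ₗ[k] A) :
    (A ⊗[k] H) ⊗[k] (A ⊗[k] H) →ₗ[k] A ⊗[k] H :=
  map (LinearMap.mul' k A) LinearMap.id
  ∘ₗ (TensorProduct.assoc k A A H).symm.toLinearMap
  ∘ₗ map LinearMap.id
      (map act (LinearMap.mul' k H)
        ∘ₗ (tensorTensorTensorComm k H H A H).toLinearMap)
  ∘ₗ (TensorProduct.assoc k A (H ⊗[k] H) (A ⊗[k] H)).toLinearMap
  ∘ₗ map (map LinearMap.id (Coalgebra.comul : H →ₗ[k] H ⊗[k] H)) LinearMap.id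

/-- The cotensor product `H1□H1`. -/
def cot (d : A →ₗ[k] H) : Set ((A ⊗[k] H) ⊗[k] (A ⊗[k] H)) :=
  {x | (TensorProduct.assoc k (A ⊗[k] H) H (A ⊗[k] H)).toLinearMap
        (map (DRmap k A H) LinearMap.id x) = map LinearMap.id (DLmap k A H d) x}

/-- A Hopf (algebra) crossed module. -/
structure HopfCrossedModule (act : H ⊗[k] A →ₗ[k] A) (d : A →ₗ[k] H) : Prop where
  /-- `(hg)▷a = h▷(g▷a)` -/
  act_mul : ∀ (h g : H) (a : A), act ((h * g) ⊗ₜ[k] a) = act (h ⊗ₜ[k] act (g ⊗ₜ[k] a))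
  /-- `1▷a = a` -/
  act_one : ∀ a : A, act ((1 : H) ⊗ₜ[k] a) = a
  /-- `h▷(ab) = (h₁▷a)(h₂▷b)` -/
  act_mul_alg : act ∘ₗ map LinearMap.id (LinearMap.mul' k A)
      = LinearMap.mul' k A ∘ₗ map act act
          ∘ₗ (tensorTensorTensorComm k H H A A).toLinearMap
          ∘ₗ map (Coalgebra.comul : H →ₗ[k] H ⊗[k] H) LinearMap.id
  /-- `h▷1 = ε(h)1` -/
  act_unit : ∀ h : H, act (h ⊗ₜ[k] (1 : A)) = (Coalgebra.counit h : k) • (1 : A)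
  /-- `Δ(h▷a) = (h₁▷a₁)⊗(h₂▷a₂)` -/
  act_comul : (Coalgebra.comul : A →ₗ[k] A ⊗[k] A) ∘ₗ act
      = map act act ∘ₗ (tensorTensorTensorComm k H H A A).toLinearMap
          ∘ₗ map (Coalgebra.comul : H →ₗ[k] H ⊗[k] H) (Coalgebra.comul : A →ₗ[k] A ⊗[k] A)
  /-- `ε(h▷a) = ε(h)ε(a)` -/
  act_counit : ∀ (h : H) (a : A),
      (Coalgebra.counit (act (h ⊗ₜ[k] a)) : k) = Coalgebra.counit h * Coalgebra.counit a
  /-- `h₁ ⊗ (h₂▷a) = h₂ ⊗ (h₁▷a)` -/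
  act_cocomm : map LinearMap.id act ∘ₗ (TensorProduct.assoc k H H A).toLinearMap
        ∘ₗ map (Coalgebra.comul : H →ₗ[k] H ⊗[k] H) LinearMap.id
      = map LinearMap.id act ∘ₗ (TensorProduct.assoc k H H A).toLinearMap
        ∘ₗ map ((TensorProduct.comm k H H).toLinearMap
              ∘ₗ (Coalgebra.comul : H →ₗ[k] H ⊗[k] H)) LinearMap.id
  /-- `d` is multiplicative -/
  d_mul : ∀ a b : A, d (a * b) = d a * d b
  /-- `d(1) = 1` -/
  d_one : d 1 = 1
  /-- `d` is comultiplicative -/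
  d_comul : (Coalgebra.comul : H →ₗ[k] H ⊗[k] H) ∘ₗ d
      = map d d ∘ₗ (Coalgebra.comul : A →ₗ[k] A ⊗[k] A)
  /-- `ε∘d = ε` -/
  d_counit : (Coalgebra.counit : H →ₗ[k] k) ∘ₗ d = (Coalgebra.counit : A →ₗ[k] k)
  /-- `d(h▷a) = h₁ d(a) S(h₂)` -/
  d_act : d ∘ₗ act = LinearMap.mul' k H
      ∘ₗ map LinearMap.id (LinearMap.mul' k H
            ∘ₗ map LinearMap.id (HopfAlgebra.antipode (R := k) : H →ₗ[k] H)
            ∘ₗ (TensorProduct.comm k H H).toLinearMap)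
      ∘ₗ (TensorProduct.assoc k H H H).toLinearMap
      ∘ₗ map (Coalgebra.comul : H →ₗ[k] H ⊗[k] H) d
  /-- `d(a)▷b = a₁ b S(a₂)` -/
  crossed : act ∘ₗ map d LinearMap.id = LinearMap.mul' k A
      ∘ₗ map LinearMap.id (LinearMap.mul' k A
            ∘ₗ map LinearMap.id (HopfAlgebra.antipode (R := k) : A →ₗ[k] A)
            ∘ₗ (TensorProduct.comm k A A).toLinearMap)
      ∘ₗ (TensorProduct.assoc k A A A).toLinearMap
      ∘ₗ map (Coalgebra.comul : A →ₗ[k] A ⊗[k] A) LinearMap.id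

open HopfAlgebra Coalgebra

theorem Coalgebra.sum_counit_smul_right {R C : Type*} [CommSemiring R] [AddCommMonoid C]
    [Module R C] [Coalgebra R C] {c : C} {ι : Type*} (rc : Repr R c ι) :
    ∑ i ∈ rc.index, counit (R := R) (rc.right i) • rc.left i = c := by
  simpa only [map_sum, rid_tmul, one_smul] using
    congrArg (_root_.TensorProduct.rid R C) (sum_tmul_counit_eq rc)

section
variable {k A H}

theorem tmap_tmul (d : A →ₗ[k] H) (a : A) (h : H) : tmap k A H d (a ⊗ₜ h) = d a * h := rfl

theorem SS_tmul (d : A →ₗ[k] H) {a : A} (h : H) {ι : Type*} (ra : Repr k a ι) :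
    SS k A H d (a ⊗ₜ h) = ∑ i ∈ ra.index, antipode k (ra.left i) ⊗ₜ (d (ra.right i) * h) := by
  simp [SS, ← ra.eq, sum_tmul, tmap_tmul]

theorem circ_tmul (a : A) (h : H) (b : A) (g : H) :
    circ k A H ((a ⊗ₜ h) ⊗ₜ (b ⊗ₜ g)) = counit (R := k) h • ((a * b) ⊗ₜ g) := by
  simp [circ, tmul_smul]

theorem DLmap_tmul (d : A →ₗ[k] H) {b : A} {g : H} {ι κ : Type*} (rb : Repr k b ι)
    (rg : Repr k g κ) :
    DLmap k A H d (b ⊗ₜ g) = ∑ j ∈ rb.index, ∑ l ∈ rg.index,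
      (d (rb.left j) * rg.left l) ⊗ₜ (rb.right j ⊗ₜ rg.right l) := by
  simp [DLmap, comul1, ← rb.eq, ← rg.eq, sum_tmul, tmul_sum, tmap_tmul,
    Finset.sum_comm (s := rg.index)]

variable (k A H) in
def counitMiddle : (A ⊗[k] H) ⊗[k] H →ₗ[k] A ⊗[k] H :=
  LinearMap.lTensor A ((TensorProduct.lid k H).toLinearMap ∘ₗ counit.rTensor H) ∘ₗ
    (TensorProduct.assoc k A H H).toLinearMap

theorem counitMiddle_tmul (a : A) (h g : H) :
    counitMiddle k A H ((a ⊗ₜ h) ⊗ₜ g) = counit (R := k) h • (a ⊗ₜ g) := by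
  simp [counitMiddle, tmul_smul]

theorem counitMiddle_DRmap (m : A ⊗[k] H) : counitMiddle k A H (DRmap k A H m) = m := by
  induction m using TensorProduct.induction_on with
  | zero => simp
  | add m n hm hn => simp [hm, hn]
  | tmul a h =>
    conv_rhs => rw [← sum_counit_smul_right (ℛ k a), ← sum_counit_smul (ℛ k h)]
    simp [DRmap, comul1, smap, ← (ℛ k a).eq, ← (ℛ k h).eq, sum_tmul, tmul_sum, counitMiddle_tmul,
      Finset.smul_sum, smul_tmul', smul_smul]

variable (k A H) in
/-- Both sides of the identity factor through `Φ((a⊗h) ⊗ m ⊗ n) = 𝒮(n) ∘ 𝒮(ε(h) a ⊗ m)`: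
`𝒮(x ∘ y)` through `id ⊗ DL` and `𝒮(y) ∘ 𝒮(x)` through `DR ⊗ id`, so they agree on `H1□H1`. -/
def Phi (d : A →ₗ[k] H) : (A ⊗[k] H) ⊗[k] (H ⊗[k] (A ⊗[k] H)) →ₗ[k] A ⊗[k] H :=
  circ k A H ∘ₗ map (SS k A H d) (SS k A H d ∘ₗ counitMiddle k A H)
    ∘ₗ (TensorProduct.comm k _ _).toLinearMap
    ∘ₗ (TensorProduct.assoc k (A ⊗[k] H) H (A ⊗[k] H)).symm.toLinearMap

theorem Phi_comp_DRmap (d : A →ₗ[k] H) :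
    Phi k A H d ∘ₗ (TensorProduct.assoc k (A ⊗[k] H) H (A ⊗[k] H)).toLinearMap
        ∘ₗ map (DRmap k A H) LinearMap.id
      = circ k A H ∘ₗ map (SS k A H d) (SS k A H d)
        ∘ₗ (TensorProduct.comm k (A ⊗[k] H) (A ⊗[k] H)).toLinearMap := by
  ext m n
  simp [Phi, counitMiddle_DRmap]

theorem circ_SS_tmul (d : A →ₗ[k] H) (hdc : counit ∘ₗ d = counit) (b : A) (g : H)
    (y : A ⊗[k] H) :
    circ k A H (SS k A H d (b ⊗ₜ g) ⊗ₜ y) = counit (R := k) g • ((antipode k b ⊗ₜ 1) * y) := by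
  induction y using TensorProduct.induction_on with
  | zero => simp
  | add y z hy hz => simp only [tmul_add, map_add, hy, hz, mul_add, smul_add]
  | tmul c h =>
    have hdc' (x : A) : counit (R := k) (d x) = counit x := congr($hdc x)
    conv_rhs => rw [← sum_counit_smul_right (ℛ k b)]
    simp [SS_tmul d g (ℛ k b), sum_tmul, circ_tmul, hdc', Finset.sum_mul, Finset.smul_sum,
      smul_tmul', smul_smul, mul_comm]

theorem Phi_tmul (d : A →ₗ[k] H) (hdc : counit ∘ₗ d = counit) (a : A) (h m : H) (b : A)
    (g : H) :
    Phi k A H d ((a ⊗ₜ h) ⊗ₜ (m ⊗ₜ (b ⊗ₜ g)))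
      = (counit (R := k) h * counit (R := k) g) •
          ((antipode k b ⊗ₜ 1) * SS k A H d (a ⊗ₜ m)) := by
  simp [Phi, counitMiddle_tmul, circ_SS_tmul d hdc, smul_smul]

theorem SS_mul_tmul (d : A →ₗ[k] H) (hdm : ∀ x y : A, d (x * y) = d x * d y) (a : A) {b : A}
    (g : H) {ι : Type*} (rb : Repr k b ι) :
    SS k A H d ((a * b) ⊗ₜ g)
      = ∑ j ∈ rb.index,
          (antipode k (rb.left j) ⊗ₜ 1) * SS k A H d (a ⊗ₜ (d (rb.right j) * g)) := by
  simp [SS_tmul _ _ ((ℛ k a).mul rb), SS_tmul _ _ (ℛ k a), Finset.sum_product, Finset.mul_sum,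
    antipode_mul_antidistrib, hdm, mul_assoc, Finset.sum_comm (s := rb.index)]

theorem SS_comp_circ (d : A →ₗ[k] H) (hdm : ∀ x y : A, d (x * y) = d x * d y)
    (hdc : counit ∘ₗ d = counit)
    (hsym : map LinearMap.id d ∘ₗ (comul : A →ₗ[k] A ⊗[k] A)
      = map LinearMap.id d ∘ₗ (TensorProduct.comm k A A).toLinearMap ∘ₗ comul) :
    SS k A H d ∘ₗ circ k A H = Phi k A H d ∘ₗ map LinearMap.id (DLmap k A H d) := by
  refine TensorProduct.ext_fourfold' fun a h b g => ?_
  set rb := ℛ k b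
  set T : A ⊗[k] H →ₗ[k] A ⊗[k] H := LinearMap.mul' k (A ⊗[k] H) ∘ₗ
    map (Algebra.TensorProduct.includeLeft.toLinearMap ∘ₗ antipode k)
      (SS k A H d ∘ₗ TensorProduct.mk k A H a ∘ₗ LinearMap.mulRight k g)
  have hT (c : A) (m : H) : T (c ⊗ₜ m) = (antipode k c ⊗ₜ 1) * SS k A H d (a ⊗ₜ (m * g)) := rfl
  have hswap : ∑ j ∈ rb.index, T (rb.left j ⊗ₜ d (rb.right j))
      = ∑ j ∈ rb.index, T (rb.right j ⊗ₜ d (rb.left j)) := by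
    simpa [← rb.eq, map_sum] using congr(T ($hsym b))
  calc SS k A H d (circ k A H ((a ⊗ₜ h) ⊗ₜ (b ⊗ₜ g)))
      = counit (R := k) h • ∑ j ∈ rb.index, T (rb.left j ⊗ₜ d (rb.right j)) := by
        simp [circ_tmul, SS_mul_tmul d hdm a g rb, hT]
    _ = counit (R := k) h • ∑ j ∈ rb.index, T (rb.right j ⊗ₜ d (rb.left j)) := by rw [hswap]
    _ = Phi k A H d ((a ⊗ₜ h) ⊗ₜ DLmap k A H d (b ⊗ₜ g)) := by
        simp only [hT]
        conv_lhs => rw [← sum_counit_smul_right (ℛ k g)]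
        simp [DLmap_tmul d rb (ℛ k g), tmul_sum, Phi_tmul d hdc, Finset.mul_sum, Finset.smul_sum,
          mul_smul]

end

/-- Proposition 2.7(i): if `a₁ ⊗ d(a₂) = a₂ ⊗ d(a₁)` for all `a ∈ A` then `𝒮` is
anti-multiplicative for `∘` on the cotensor product. -/
theorem statement10 (act : H ⊗[k] A →ₗ[k] A) (d : A →ₗ[k] H)
    (hcm : HopfCrossedModule k A H act d)
    (hsym : map LinearMap.id d ∘ₗ (Coalgebra.comul : A →ₗ[k] A ⊗[k] A)
      = map LinearMap.id d ∘ₗ (TensorProduct.comm k A A).toLinearMap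
          ∘ₗ (Coalgebra.comul : A →ₗ[k] A ⊗[k] A)) :
    ∀ x ∈ cot k A H d,
      SS k A H d (circ k A H x)
        = circ k A H
            (map (SS k A H d) (SS k A H d) ((TensorProduct.comm k (A ⊗[k] H) (A ⊗[k] H)) x)) := by
  intro x hx
  calc SS k A H d (circ k A H x)
      = Phi k A H d (map LinearMap.id (DLmap k A H d) x) :=
        congr($(SS_comp_circ d hcm.d_mul hcm.d_counit hsym) x)
    _ = Phi k A H d ((TensorProduct.assoc k (A ⊗[k] H) H (A ⊗[k] H))
          (map (DRmap k A H) LinearMap.id x)) := congrArg _ hx.symm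
    _ = _ := congr($(Phi_comp_DRmap d) x)

end
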